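/- arXiv:2512.23770 — 2 statements merged into one kernel-verified Lean document; each statement's English description precedes it below -/
import Mathlib

section
/- Let θ, δ_r, δ_c ∈ ℝ^d with ‖δ_r‖ ≤ M and ‖δ_c‖ ≤ M, let J_c : ℝ^d → ℝ be differentiable with gradient g_c := ∇J_c(θ) at θ and with ∇J_c L-Lipschitz on the closed ball of radius M centred at θ, and let β ∈ (0,1]. Assume ⟨g_c, δ_c⟩ ≤ 0 and ⟨g_c, δ_c⟩ ≤ ⟨g_c, δ_r⟩, set ε := −β·⟨g_c, δ_c⟩ and δ := (1−μ*)·δ_r + μ*·δ_c. Then for every α ∈ [0,1]: J_c(θ + α·δ) ≤ J_c(θ) + α·β·⟨g_c, δ_c⟩ + (L·α²/2)·‖δ‖². -/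
/-!
Along the segment `t ↦ θ + t • v` the Lipschitz bound on `∇J_c` gives
`⟪∇J_c(θ + t • v) - ∇J_c θ, v⟫ ≤ L t ‖v‖²`, so `J_c(θ + t • v) - t ⟪∇J_c θ, v⟫ - L t²/2 ‖v‖²`
is antitone on `[0, 1]`; this is the descent lemma. For the SB-TRPO direction `δ`, the
coefficient `μ*` lies in `[0, 1]`, so `δ` is a convex combination of `δ_r` and `δ_c` and
stays in the ball of radius `M`, and `μ*` is chosen so that `⟪g_c, δ⟫ ≤ -ε = β ⟪g_c, δ_c⟫`.
-/

open RealInnerProductSpace Metric Set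

open scoped NNReal

section Descent

variable {F : Type*} [NormedAddCommGroup F] [InnerProductSpace ℝ F] {f : F → ℝ} {x v : F} {r : ℝ}

theorem add_smul_mem_closedBall_of_norm_le {t : ℝ} (hv : ‖v‖ ≤ r) (ht : t ∈ Icc (0 : ℝ) 1) :
    x + t • v ∈ closedBall x r := by
  have hx : x ∈ closedBall x r := mem_closedBall_self ((norm_nonneg v).trans hv)
  have hxv : x + v ∈ closedBall x r := by
    rwa [mem_closedBall, dist_eq_norm, add_sub_cancel_left]
  exact (convex_closedBall x r).add_smul_mem hx hxv ht

theorem hasDerivAt_comp_add_smul [CompleteSpace F] (hf : Differentiable ℝ f) (t : ℝ) :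
    HasDerivAt (fun s : ℝ => f (x + s • v)) ⟪gradient f (x + t • v), v⟫ t := by
  have hline : HasDerivAt (fun s : ℝ => x + s • v) v t := by
    simpa using ((hasDerivAt_id t).smul_const v).const_add x
  exact (hf _).hasGradientAt.hasFDerivAt.comp_hasDerivAt t hline

theorem inner_gradient_sub_le_of_lipschitzOnWith [CompleteSpace F] {K : ℝ≥0}
    (hLip : LipschitzOnWith K (gradient f) (closedBall x r)) (hv : ‖v‖ ≤ r) {t : ℝ}
    (ht : t ∈ Icc (0 : ℝ) 1) :
    ⟪gradient f (x + t • v) - gradient f x, v⟫ ≤ K * t * ‖v‖ ^ 2 := by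
  have hdist : dist (x + t • v) x = t * ‖v‖ := by
    rw [dist_eq_norm, add_sub_cancel_left, norm_smul, Real.norm_of_nonneg ht.1]
  have hgrad : ‖gradient f (x + t • v) - gradient f x‖ ≤ K * (t * ‖v‖) := by
    rw [← dist_eq_norm, ← hdist]
    exact hLip.dist_le_mul _ (add_smul_mem_closedBall_of_norm_le hv ht) _
      (mem_closedBall_self ((norm_nonneg v).trans hv))
  calc ⟪gradient f (x + t • v) - gradient f x, v⟫
      ≤ ‖gradient f (x + t • v) - gradient f x‖ * ‖v‖ := real_inner_le_norm _ _
    _ ≤ K * (t * ‖v‖) * ‖v‖ := by gcongr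
    _ = K * t * ‖v‖ ^ 2 := by ring

theorem le_add_inner_gradient_add_of_lipschitzOnWith [CompleteSpace F] {K : ℝ≥0}
    (hf : Differentiable ℝ f) (hLip : LipschitzOnWith K (gradient f) (closedBall x r))
    (hv : ‖v‖ ≤ r) :
    f (x + v) ≤ f x + ⟪gradient f x, v⟫ + K / 2 * ‖v‖ ^ 2 := by
  set φ : ℝ → ℝ := fun t => f (x + t • v) - t * ⟪gradient f x, v⟫ - K * t ^ 2 / 2 * ‖v‖ ^ 2
  have hφ : ∀ t, HasDerivAt φ
      (⟪gradient f (x + t • v), v⟫ - ⟪gradient f x, v⟫ - K * t * ‖v‖ ^ 2) t := by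
    intro t
    have hsq : HasDerivAt (fun s : ℝ => K * s ^ 2 / 2 * ‖v‖ ^ 2) (K * t * ‖v‖ ^ 2) t := by
      have hpow : HasDerivAt (fun s : ℝ => s ^ 2) (2 * t) t := by
        simpa using hasDerivAt_pow 2 t
      exact (((hpow.const_mul (K : ℝ)).div_const 2).mul_const (‖v‖ ^ 2)).congr_deriv (by ring)
    exact (((hasDerivAt_comp_add_smul hf t).sub
      ((hasDerivAt_id t).mul_const ⟪gradient f x, v⟫)).sub hsq).congr_deriv (by rw [one_mul])
  have hanti : AntitoneOn φ (Icc 0 1) := by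
    refine antitoneOn_of_deriv_nonpos (convex_Icc 0 1)
      (fun t _ => (hφ t).continuousAt.continuousWithinAt)
      (fun t _ => (hφ t).differentiableAt.differentiableWithinAt) fun t ht => ?_
    rw [interior_Icc] at ht
    have := inner_gradient_sub_le_of_lipschitzOnWith hLip hv (Ioo_subset_Icc_self ht)
    rw [inner_sub_left] at this
    rw [(hφ t).deriv]
    linarith
  have h01 := hanti (left_mem_Icc.2 zero_le_one) (right_mem_Icc.2 zero_le_one) zero_le_one
  simp only [φ, one_smul, zero_smul, add_zero] at h01
  linarith

end Descent

/-- The safety-biased coefficient `μ*` of the SB-TRPO update. -/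
noncomputable def mustar {d : ℕ} (gc δr δc : EuclideanSpace ℝ (Fin d)) (ε : ℝ) : ℝ :=
  if ⟪gc, δc⟫ ≠ ⟪gc, δr⟫ ∧ ⟪gc, δr⟫ ≥ -ε then
    (⟪gc, δr⟫ + ε) / (⟪gc, δr⟫ - ⟪gc, δc⟫)
  else 0

section Mustar

variable {d : ℕ} {gc δr δc : EuclideanSpace ℝ (Fin d)} {ε : ℝ}

theorem mustar_mem_Icc (h : ⟪gc, δc⟫ ≤ ⟪gc, δr⟫) (hε : ε ≤ -⟪gc, δc⟫) :
    mustar gc δr δc ε ∈ Icc (0 : ℝ) 1 := by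
  unfold mustar
  split_ifs with hc
  · have hden : 0 < ⟪gc, δr⟫ - ⟪gc, δc⟫ := sub_pos.2 (lt_of_le_of_ne h hc.1)
    exact ⟨div_nonneg (by linarith [hc.2]) hden.le, (div_le_one hden).2 (by linarith)⟩
  · exact ⟨le_rfl, zero_le_one⟩

theorem inner_mustar_combination_le (hε : ε ≤ -⟪gc, δc⟫) :
    ⟪gc, (1 - mustar gc δr δc ε) • δr + mustar gc δr δc ε • δc⟫ ≤ -ε := by
  rw [inner_add_right, real_inner_smul_right, real_inner_smul_right]
  unfold mustar
  split_ifs with hc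
  · -- `μ*` is chosen to make this an equality
    have hden : ⟪gc, δr⟫ - ⟪gc, δc⟫ ≠ 0 := sub_ne_zero.2 (Ne.symm hc.1)
    have hμ := div_mul_cancel₀ (⟪gc, δr⟫ + ε) hden
    linear_combination -hμ
  · rw [not_and_or, not_not, not_le] at hc
    rcases hc with heq | hlt
    · rw [← heq]; linarith
    · linarith

end Mustar

theorem stmt7_general {d : ℕ} (θ δr δc : EuclideanSpace ℝ (Fin d)) (M L : ℝ)
    (hL : 0 < L) (hδr : ‖δr‖ ≤ M) (hδc : ‖δc‖ ≤ M)
    (Jc : EuclideanSpace ℝ (Fin d) → ℝ) (hJc : Differentiable ℝ Jc)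
    (gc : EuclideanSpace ℝ (Fin d)) (hgc : gradient Jc θ = gc)
    (hLip : LipschitzOnWith (Real.toNNReal L) (gradient Jc) (Metric.closedBall θ M))
    (β : ℝ) (hβ1 : β ≤ 1)
    (h1 : ⟪gc, δc⟫ ≤ 0) (h2 : ⟪gc, δc⟫ ≤ ⟪gc, δr⟫)
    (δ : EuclideanSpace ℝ (Fin d))
    (hδ : δ = (1 - mustar gc δr δc (-β * ⟪gc, δc⟫)) • δr
            + mustar gc δr δc (-β * ⟪gc, δc⟫) • δc) :
    ∀ α ∈ Set.Icc (0:ℝ) 1,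
      Jc (θ + α • δ) ≤ Jc θ + α * β * ⟪gc, δc⟫ + (L * α ^ 2 / 2) * ‖δ‖ ^ 2 := by
  intro α hα
  have hε : -β * ⟪gc, δc⟫ ≤ -⟪gc, δc⟫ := by nlinarith
  obtain ⟨hμ0, hμ1⟩ := mustar_mem_Icc h2 hε
  have hδM : ‖δ‖ ≤ M := by
    have hball := convex_closedBall (0 : EuclideanSpace ℝ (Fin d)) M
      (mem_closedBall_zero_iff.2 hδr) (mem_closedBall_zero_iff.2 hδc)
      (sub_nonneg.2 hμ1) hμ0 (sub_add_cancel _ _)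
    rwa [← hδ, mem_closedBall_zero_iff] at hball
  have hinner : ⟪gc, δ⟫ ≤ β * ⟪gc, δc⟫ := by
    simpa [hδ] using inner_mustar_combination_le (δr := δr) hε
  have hαδ : ‖α • δ‖ ≤ M := by
    rw [norm_smul, Real.norm_of_nonneg hα.1]
    nlinarith [norm_nonneg δ, hα.2]
  have hdesc := le_add_inner_gradient_add_of_lipschitzOnWith hJc hLip hαδ
  rw [hgc, real_inner_smul_right, norm_smul, Real.norm_of_nonneg hα.1,
    Real.coe_toNNReal L hL.le] at hdesc
  nlinarith [mul_le_mul_of_nonneg_left hinner hα.1]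

/-- Descent lemma for the cost along the SB-TRPO direction:
if `∇J_c` is `L`-Lipschitz on the closed ball of radius `M` around `θ`,
`‖δ_r‖, ‖δ_c‖ ≤ M`, `⟨g_c,δ_c⟩ ≤ 0` and `⟨g_c,δ_c⟩ ≤ ⟨g_c,δ_r⟩`, then for all
`α ∈ [0,1]`: `J_c(θ + αδ) ≤ J_c(θ) + αβ⟨g_c,δ_c⟩ + (Lα²/2)‖δ‖²`. -/
theorem stmt7 {d : ℕ} (θ δr δc : EuclideanSpace ℝ (Fin d)) (M L : ℝ)
    (hM : 0 < M) (hL : 0 < L) (hδr : ‖δr‖ ≤ M) (hδc : ‖δc‖ ≤ M)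
    (Jc : EuclideanSpace ℝ (Fin d) → ℝ) (hJc : Differentiable ℝ Jc)
    (gc : EuclideanSpace ℝ (Fin d)) (hgc : gradient Jc θ = gc)
    (hLip : LipschitzOnWith (Real.toNNReal L) (gradient Jc) (Metric.closedBall θ M))
    (β : ℝ) (hβ0 : 0 < β) (hβ1 : β ≤ 1)
    (h1 : ⟪gc, δc⟫ ≤ 0) (h2 : ⟪gc, δc⟫ ≤ ⟪gc, δr⟫)
    (δ : EuclideanSpace ℝ (Fin d))
    (hδ : δ = (1 - mustar gc δr δc (-β * ⟪gc, δc⟫)) • δr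
            + mustar gc δr δc (-β * ⟪gc, δc⟫) • δc) :
    ∀ α ∈ Set.Icc (0:ℝ) 1,
      Jc (θ + α • δ) ≤ Jc θ + α * β * ⟪gc, δc⟫ + (L * α ^ 2 / 2) * ‖δ‖ ^ 2 :=
  stmt7_general θ δr δc M L hL hδr hδc Jc hJc gc hgc hLip β hβ1 h1 h2 δ hδ
end

section
/- Let F be a symmetric positive definite real d×d matrix, ε_KL > 0, θ ∈ ℝ^d, β ∈ (0,1], and let J_c : ℝ^d → ℝ be differentiable with gradient g_c := ∇J_c(θ) ≠ 0 at θ and with ∇J_c Lipschitz on the closed ball of radius M := max(‖δ_r‖, ‖δ_c‖) centred at θ. Suppose δ_r ∈ T and δ_c ∈ T minimizes δ ↦ ⟨g_c, δ⟩ over T; set ε := −β·⟨g_c, δ_c⟩ and δ := (1−μ*)·δ_r + μ*·δ_c. Then there exists α ∈ (0,1] with J_c(θ + α·δ) < J_c(θ). -/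
/-!
Since the trust region is a neighbourhood of `0`, it contains `-t • g_c` for some `t > 0`, so the
minimiser `δ_c` of `⟨g_c, ·⟩` satisfies `⟨g_c, δ_c⟩ < 0` and hence `ε > 0`. If `μ*` is given by
the formula, then `⟨g_c, δ⟩ = -ε`; otherwise `δ = δ_r` and either `⟨g_c, δ_r⟩ = ⟨g_c, δ_c⟩` or
`⟨g_c, δ_r⟩ < -ε`. In all cases `δ` is a descent direction, and a differentiable function
decreases along a descent direction for small steps (otherwise `θ` would minimise `J_c` on the
segment `[θ, θ + δ]`, and Fermat's rule would give `⟨g_c, δ⟩ ≥ 0`).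
-/

open RealInnerProductSpace Filter Topology Convex

theorem exists_mem_Ioc_lt_of_hasFDerivAt {E : Type*} [NormedAddCommGroup E] [NormedSpace ℝ E]
    {f : E → ℝ} {f' : StrongDual ℝ E} {x v : E} (hf : HasFDerivAt f f' x) (hv : f' v < 0) :
    ∃ α ∈ Set.Ioc (0 : ℝ) 1, f (x + α • v) < f x := by
  by_contra! hmin
  have hmin_seg : IsMinOn f [x -[ℝ] x + v] x := by
    rw [segment_eq_image']
    rintro _ ⟨α, ⟨hα0, hα1⟩, rfl⟩
    rcases hα0.eq_or_lt with rfl | hα0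
    · simp
    · simpa using hmin α ⟨hα0, hα1⟩
  have hv_cone : v ∈ posTangentConeAt [x -[ℝ] x + v] x :=
    mem_posTangentConeAt_of_segment_subset (Set.Subset.refl _)
  exact hv.not_ge (hmin_seg.localize.hasFDerivWithinAt_nonneg hf.hasFDerivWithinAt hv_cone)

theorem exists_mem_Ioc_lt_of_hasGradientAt {E : Type*} [NormedAddCommGroup E]
    [InnerProductSpace ℝ E] [CompleteSpace E] {f : E → ℝ} {g x v : E} (hf : HasGradientAt f g x)
    (hv : ⟪g, v⟫ < 0) : ∃ α ∈ Set.Ioc (0 : ℝ) 1, f (x + α • v) < f x :=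
  exists_mem_Ioc_lt_of_hasFDerivAt hf.hasFDerivAt (by simpa using hv)

theorem inner_lt_zero_of_forall_mem_nhds_le {E : Type*} [NormedAddCommGroup E]
    [InnerProductSpace ℝ E] {T : Set E} (hT : T ∈ 𝓝 0) {g y : E} (hg : g ≠ 0)
    (hy : ∀ z ∈ T, ⟪g, y⟫ ≤ ⟪g, z⟫) : ⟪g, y⟫ < 0 := by
  have hlim : Tendsto (fun t : ℝ => (-t) • g) (𝓝[>] 0) (𝓝 0) := by
    have : Continuous fun t : ℝ => (-t) • g := by fun_prop
    simpa using (this.tendsto 0).mono_left nhdsWithin_le_nhds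
  obtain ⟨t, htT, ht⟩ := ((hlim.eventually hT).and self_mem_nhdsWithin).exists
  have hg_sq : 0 < ⟪g, g⟫ := real_inner_self_pos.mpr hg
  calc ⟪g, y⟫ ≤ ⟪g, (-t) • g⟫ := hy _ htT
    _ = -(t * ⟪g, g⟫) := by rw [real_inner_smul_right, neg_mul]
    _ < 0 := neg_neg_of_pos (mul_pos ht hg_sq)

theorem setOf_half_inner_toEuclideanLin_le_mem_nhds {d : ℕ} (F : Matrix (Fin d) (Fin d) ℝ)
    {r : ℝ} (hr : 0 < r) :
    {δ : EuclideanSpace ℝ (Fin d) | (1/2) * ⟪δ, Matrix.toEuclideanLin F δ⟫ ≤ r} ∈ 𝓝 0 := by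
  have hcont : Continuous fun δ : EuclideanSpace ℝ (Fin d) =>
      (1/2) * ⟪δ, Matrix.toEuclideanLin F δ⟫ :=
    continuous_const.mul (continuous_id.inner (LinearMap.continuous_of_finiteDimensional _))
  refine Filter.mem_of_superset ((isOpen_lt hcont continuous_const).mem_nhds ?_)
    (Set.ofPred_subset_ofPred.mpr fun _ => le_of_lt)
  simpa using hr

theorem inner_mustar_combination_lt_zero {d : ℕ} (gc δr δc : EuclideanSpace ℝ (Fin d)) {ε : ℝ}
    (hε : 0 < ε) (hc : ⟪gc, δc⟫ < 0) :
    ⟪gc, (1 - mustar gc δr δc ε) • δr + mustar gc δr δc ε • δc⟫ < 0 := by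
  rw [inner_add_right, real_inner_smul_right, real_inner_smul_right, mustar]
  split_ifs with h
  · obtain ⟨hne, -⟩ := h
    have hD : ⟪gc, δr⟫ - ⟪gc, δc⟫ ≠ 0 := sub_ne_zero.mpr (Ne.symm hne)
    have hcomb : (1 - (⟪gc, δr⟫ + ε) / (⟪gc, δr⟫ - ⟪gc, δc⟫)) * ⟪gc, δr⟫
        + (⟪gc, δr⟫ + ε) / (⟪gc, δr⟫ - ⟪gc, δc⟫) * ⟪gc, δc⟫ = -ε := by
      field_simp
      ring
    linarith
  · rw [not_and_or, not_ne_iff, not_le] at h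
    rcases h with heq | hlt
    · simpa [← heq] using hc
    · simp only [sub_zero, one_mul, zero_mul, add_zero]
      linarith

theorem stmt10_general {d : ℕ} (F : Matrix (Fin d) (Fin d) ℝ)
    (εKL : ℝ) (hεKL : 0 < εKL) (θ : EuclideanSpace ℝ (Fin d))
    (β : ℝ) (hβ0 : 0 < β)
    (Jc : EuclideanSpace ℝ (Fin d) → ℝ) (hJc : Differentiable ℝ Jc)
    (gc : EuclideanSpace ℝ (Fin d)) (hgc : gradient Jc θ = gc) (hgc0 : gc ≠ 0)
    (δr δc : EuclideanSpace ℝ (Fin d))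
    (hmin : ∀ δ : EuclideanSpace ℝ (Fin d),
      (1/2) * ⟪δ, Matrix.toEuclideanLin F δ⟫ ≤ εKL → ⟪gc, δc⟫ ≤ ⟪gc, δ⟫)
    (δ : EuclideanSpace ℝ (Fin d))
    (hδ : δ = (1 - mustar gc δr δc (-β * ⟪gc, δc⟫)) • δr
            + mustar gc δr δc (-β * ⟪gc, δc⟫) • δc) :
    ∃ α ∈ Set.Ioc (0:ℝ) 1, Jc (θ + α • δ) < Jc θ := by
  have hc : ⟪gc, δc⟫ < 0 :=
    inner_lt_zero_of_forall_mem_nhds_le (setOf_half_inner_toEuclideanLin_le_mem_nhds F hεKL)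
      hgc0 hmin
  have hε : 0 < -β * ⟪gc, δc⟫ := mul_pos_of_neg_of_neg (neg_lt_zero.mpr hβ0) hc
  have hgrad : HasGradientAt Jc gc θ := hgc ▸ (hJc θ).hasGradientAt
  exact exists_mem_Ioc_lt_of_hasGradientAt hgrad
    (hδ ▸ inner_mustar_combination_lt_zero gc δr δc hε hc)

/-- cost part of the Performance Improvement theorem: with `F`
symmetric positive definite, `ε_KL > 0`, `g_c := ∇J_c(θ) ≠ 0`, `∇J_c`
Lipschitz on the closed ball of radius `M := max(‖δ_r‖,‖δ_c‖)` around `θ`,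
`δ_r ∈ T`, `δ_c` a minimizer of `⟨g_c,·⟩` over `T`, `ε := −β⟨g_c,δ_c⟩` and
`δ := (1−μ*)δ_r + μ*δ_c`, there exists `α ∈ (0,1]` with
`J_c(θ + αδ) < J_c(θ)`. -/
theorem stmt10 {d : ℕ} (F : Matrix (Fin d) (Fin d) ℝ) (hF : F.PosDef)
    (εKL : ℝ) (hεKL : 0 < εKL) (θ : EuclideanSpace ℝ (Fin d))
    (β : ℝ) (hβ0 : 0 < β) (hβ1 : β ≤ 1)
    (Jc : EuclideanSpace ℝ (Fin d) → ℝ) (hJc : Differentiable ℝ Jc)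
    (gc : EuclideanSpace ℝ (Fin d)) (hgc : gradient Jc θ = gc) (hgc0 : gc ≠ 0)
    (δr δc : EuclideanSpace ℝ (Fin d)) (L : NNReal)
    (hLip : LipschitzOnWith L (gradient Jc) (Metric.closedBall θ (max ‖δr‖ ‖δc‖)))
    (hδr : (1/2) * ⟪δr, Matrix.toEuclideanLin F δr⟫ ≤ εKL)
    (hδc : (1/2) * ⟪δc, Matrix.toEuclideanLin F δc⟫ ≤ εKL)
    (hmin : ∀ δ : EuclideanSpace ℝ (Fin d),
      (1/2) * ⟪δ, Matrix.toEuclideanLin F δ⟫ ≤ εKL → ⟪gc, δc⟫ ≤ ⟪gc, δ⟫)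
    (δ : EuclideanSpace ℝ (Fin d))
    (hδ : δ = (1 - mustar gc δr δc (-β * ⟪gc, δc⟫)) • δr
            + mustar gc δr δc (-β * ⟪gc, δc⟫) • δc) :
    ∃ α ∈ Set.Ioc (0:ℝ) 1, Jc (θ + α • δ) < Jc θ :=
  stmt10_general F εKL hεKL θ β hβ0 Jc hJc gc hgc hgc0 δr δc hmin δ hδ
end
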